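/- arXiv:1112.4239 — 2 statements merged into one kernel-verified Lean document; each statement's English description precedes it below -/
import Mathlib

section
/- Let G be a Hausdorff, totally disconnected, locally compact topological group and α a topological group automorphism of G. If V is a compact open subgroup of G that is tidy for α and K is a compact α-stable subgroup of G, then V ∩ K is α-stable, i.e. α(V ∩ K) = V ∩ K. -/
open Pointwise Filter Topology

variable {G : Type*}

/-- `V₊ = ⋂_{k ≥ 0} α^k(V)`. -/
def plusPart [Group G] (α : MulAut G) (V : Set G) : Set G :=
  ⋂ k : ℕ, ⇑(α ^ k) '' V

/-- `V₋ = ⋂_{k ≥ 0} α^{-k}(V)`. -/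
def minusPart [Group G] (α : MulAut G) (V : Set G) : Set G :=
  ⋂ k : ℕ, ⇑(α⁻¹ ^ k) '' V

/-- `V` is tidy above for `α` if `V = V₊V₋`. -/
def TidyAbove [Group G] (α : MulAut G) (V : Set G) : Prop :=
  V = plusPart α V * minusPart α V

/-- `V` is tidy below for `α` if `V₊₊` and `V₋₋` are closed. -/
def TidyBelow [Group G] [TopologicalSpace G] (α : MulAut G) (V : Set G) : Prop :=
  IsClosed (⋃ k : ℕ, ⇑(α ^ k) '' plusPart α V) ∧
  IsClosed (⋃ k : ℕ, ⇑(α⁻¹ ^ k) '' minusPart α V)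

/-- `V` is tidy for `α` if it is tidy above and tidy below. -/
def Tidy [Group G] [TopologicalSpace G] (α : MulAut G) (V : Set G) : Prop :=
  TidyAbove α V ∧ TidyBelow α V

/-- The nub of `α`: the intersection of all compact open subgroups tidy for `α`. -/
def nub [Group G] [TopologicalSpace G] (α : MulAut G) : Subgroup G :=
  ⨅ V ∈ {V : Subgroup G | IsCompact (V : Set G) ∧ IsOpen (V : Set G) ∧ Tidy α (V : Set G)}, V

/-- The contraction group `con(α) = { x | α^n(x) → 1 as n → ∞ }`. -/
def conSet [Group G] [TopologicalSpace G] (α : MulAut G) : Set G :=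
  {x : G | Tendsto (fun n : ℕ => (α ^ n) x) atTop (𝓝 1)}

/-- The homoclinic (two-sided contraction) group `bcg(α) = con(α) ∩ con(α⁻¹)`. -/
def bcgSet [Group G] [TopologicalSpace G] (α : MulAut G) : Set G :=
  conSet α ∩ conSet α⁻¹

/-- The bounded contraction group `bcon(α)`. -/
def bconSet [Group G] [TopologicalSpace G] (α : MulAut G) : Set G :=
  {x ∈ conSet α | IsCompact (closure (Set.range fun n : ℕ => (α⁻¹ ^ n) x))}

/-- Image of a subgroup under an automorphism. -/
def mapAut [Group G] (α : MulAut G) (V : Subgroup G) : Subgroup G where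
  carrier := ⇑α '' (V : Set G)
  one_mem' := ⟨1, V.one_mem, map_one α⟩
  mul_mem' := by
    rintro a b ⟨a', ha, rfl⟩ ⟨b', hb, rfl⟩
    exact ⟨a' * b', V.mul_mem ha hb, map_mul α a' b'⟩
  inv_mem' := by
    rintro a ⟨a', ha, rfl⟩
    exact ⟨a'⁻¹, V.inv_mem ha, map_inv α a'⟩

/-- `V₊` as a subgroup. -/
def plusSub [Group G] (α : MulAut G) (V : Subgroup G) : Subgroup G :=
  ⨅ k : ℕ, mapAut (α ^ k) V

/-- `V₋` as a subgroup. -/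
def minusSub [Group G] (α : MulAut G) (V : Subgroup G) : Subgroup G :=
  ⨅ k : ℕ, mapAut (α⁻¹ ^ k) V

/-- The shift automorphism of `F^ℤ`. -/
def shiftAut (F : Type*) [Group F] : MulAut (ℤ → F) where
  toFun f := fun n => f (n + 1)
  invFun f := fun n => f (n - 1)
  left_inv f := by funext n; show f (n - 1 + 1) = f n; congr 1; omega
  right_inv f := by funext n; show f (n + 1 - 1) = f n; congr 1; omega
  map_mul' f g := rfl

/-!
Write `x ∈ V ∩ K` as `x = u * v` with `u ∈ V₊` and `v ∈ V₋`. Since `αⁿ(v) ∈ V` for `n ≥ 0`, the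
forward orbit `αⁿ(u) = αⁿ(x) * αⁿ(v)⁻¹` stays in the compact set `K * V ∩ V₊₊`. By the Baire
category theorem the compact group `V ∩ V₊₊ = ⋃ₙ (V ∩ αⁿ(V₊))` lies in a single `αᵏ(V₊)`, and
covering a compact subset of `V₊₊` by finitely many translates of `V` puts it in a single
`α^N(V₊)`. Hence `α^(N+1)(u) ∈ α^N(V₊)`, i.e. `α(u) ∈ V₊`, and `α(x) = α(u) * α(v) ∈ V`.
`V` is tidy for `α⁻¹` too, which gives the reverse inclusion.
-/

open Set

section BaireSubgroups

variable [Group G] [TopologicalSpace G] [IsTopologicalGroup G]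

theorem Subgroup.exists_eq_top_of_iUnion_eq_univ [CompactSpace G] [BaireSpace G]
    {H : ℕ → Subgroup G} (hH : Monotone H) (hHc : ∀ n, IsClosed (H n : Set G))
    (hcover : ⋃ n, (H n : Set G) = univ) : ∃ n, H n = ⊤ := by
  obtain ⟨n, g, hg⟩ := nonempty_interior_of_iUnion_of_closed hHc hcover
  have hopen : ∀ m, IsOpen (H (n + m) : Set G) := fun m =>
    Subgroup.isOpen_mono (hH (Nat.le_add_right n m))
      ((H n).isOpen_of_mem_nhds (mem_interior_iff_mem_nhds.mp hg))
  obtain ⟨m, hm⟩ := isCompact_univ.elim_directed_cover (fun m => (H (n + m) : Set G)) hopen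
    (fun x _ => by
      obtain ⟨k, hk⟩ := mem_iUnion.mp (hcover.symm ▸ mem_univ x : x ∈ ⋃ n, (H n : Set G))
      exact mem_iUnion.mpr ⟨k, hH (Nat.le_add_left k n) hk⟩)
    (fun i j => ⟨max i j, hH (by omega), hH (by omega)⟩)
  exact ⟨n + m, eq_top_iff.mpr fun x _ => hm (mem_univ x)⟩

theorem Subgroup.exists_le_of_isCompact_of_subset_iUnion {A : Subgroup G}
    (hA : IsCompact (A : Set G)) {H : ℕ → Subgroup G} (hH : Monotone H)
    (hHc : ∀ n, IsClosed (H n : Set G)) (hAH : (A : Set G) ⊆ ⋃ n, (H n : Set G)) :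
    ∃ n, A ≤ H n := by
  have : CompactSpace A := isCompact_iff_compactSpace.mp hA
  obtain ⟨n, hn⟩ := Subgroup.exists_eq_top_of_iUnion_eq_univ (H := fun n => (H n).subgroupOf A)
    (fun _ _ hij => Subgroup.subgroupOf_mono A (hH hij))
    (fun n => (hHc n).preimage continuous_subtype_val)
    (eq_univ_of_forall fun a => by simpa [Subgroup.mem_subgroupOf] using hAH a.2)
  exact ⟨n, Subgroup.subgroupOf_eq_top.mp hn⟩

theorem IsCompact.exists_subset_of_subset_iUnion_subgroup {S : Set G} (hS : IsCompact S)
    {H : ℕ → Subgroup G} (hH : Monotone H) (hSH : S ⊆ ⋃ n, (H n : Set G)) {O : Set G}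
    (hO : IsOpen O) (hO1 : (1 : G) ∈ O) {k : ℕ} (hOk : O ∩ ⋃ n, (H n : Set G) ⊆ H k) :
    ∃ N, S ⊆ H N := by
  obtain ⟨N, hN⟩ := hS.elim_directed_cover (fun n => (H n : Set G) * O) (fun _ => hO.mul_left)
    (fun s hs => by
      obtain ⟨n, hn⟩ := mem_iUnion.mp (hSH hs)
      exact mem_iUnion.mpr ⟨n, s, hn, 1, hO1, mul_one s⟩)
    (fun i j => ⟨max i j, mul_subset_mul_right (hH (le_max_left i j)),
      mul_subset_mul_right (hH (le_max_right i j))⟩)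
  refine ⟨max N k, fun s hs => ?_⟩
  obtain ⟨h, hh, o, ho, rfl⟩ := hN hs
  obtain ⟨m, hm⟩ := mem_iUnion.mp (hSH hs)
  have hoH : o ∈ H (max N m) := by
    simpa using mul_mem (inv_mem (hH (le_max_left N m) hh)) (hH (le_max_right N m) hm)
  exact mul_mem (hH (le_max_left N k) hh)
    (hH (le_max_right N k) (hOk ⟨ho, mem_iUnion.mpr ⟨_, hoH⟩⟩))

end BaireSubgroups

section Dynamics

variable [Group G]

theorem MulAut.coe_pow_eq_iterate (β : MulAut G) (n : ℕ) : ⇑(β ^ n) = (⇑β)^[n] := by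
  induction n with
  | zero => rfl
  | succ n ih => rw [pow_succ, MulAut.coe_mul, ih, Function.iterate_succ]

theorem image_pow_eq_preimage (β : MulAut G) (n : ℕ) (s : Set G) :
    ⇑(β ^ n) '' s = ⇑(β⁻¹ ^ n) ⁻¹' s := by
  rw [inv_pow]
  exact (β ^ n).toEquiv.image_eq_preimage_symm s

theorem mem_plusPart {α : MulAut G} {s : Set G} {x : G} :
    x ∈ plusPart α s ↔ ∀ k : ℕ, (α⁻¹ ^ k) x ∈ s := by
  simp [plusPart, image_pow_eq_preimage]

theorem plusPart_inv (α : MulAut G) (s : Set G) : plusPart α⁻¹ s = minusPart α s := rfl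

theorem minusPart_inv (α : MulAut G) (s : Set G) : minusPart α⁻¹ s = plusPart α s := by
  rw [minusPart, inv_inv, plusPart]

theorem mem_minusPart {α : MulAut G} {s : Set G} {x : G} :
    x ∈ minusPart α s ↔ ∀ k : ℕ, (α ^ k) x ∈ s := by
  rw [← plusPart_inv, mem_plusPart, inv_inv]

theorem plusPart_subset (α : MulAut G) (s : Set G) : plusPart α s ⊆ s := fun _ hx => by
  simpa using mem_plusPart.mp hx 0

theorem plusPart_subset_image (α : MulAut G) (s : Set G) : plusPart α s ⊆ α '' plusPart α s := by
  rw [plusPart, image_iInter α.bijective]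
  refine subset_iInter fun k => (iInter_subset _ (k + 1)).trans ?_
  rw [image_image, pow_succ']
  rfl

theorem monotone_image_pow_plusPart (α : MulAut G) (s : Set G) :
    Monotone fun n : ℕ => ⇑(α ^ n) '' plusPart α s := by
  refine monotone_nat_of_le_succ fun n => ?_
  calc ⇑(α ^ n) '' plusPart α s ⊆ ⇑(α ^ n) '' (α '' plusPart α s) :=
        image_mono (plusPart_subset_image α s)
    _ = ⇑(α ^ (n + 1)) '' plusPart α s := by rw [image_image, pow_succ]; rfl

theorem coe_plusSub (α : MulAut G) (V : Subgroup G) : (plusSub α V : Set G) = plusPart α V := by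
  simp only [plusSub, plusPart, Subgroup.coe_iInf]
  rfl

variable [TopologicalSpace G] {α : MulAut G}

theorem IsClosed.image_mulAut_pow (hα : Continuous ⇑α⁻¹) {s : Set G} (hs : IsClosed s) (n : ℕ) :
    IsClosed (⇑(α ^ n) '' s) := by
  rw [image_pow_eq_preimage, MulAut.coe_pow_eq_iterate]
  exact hs.preimage (hα.iterate n)

theorem IsClosed.plusPart (hα : Continuous ⇑α⁻¹) {s : Set G} (hs : IsClosed s) :
    IsClosed (plusPart α s) :=
  isClosed_iInter fun k => hs.image_mulAut_pow hα k

theorem Tidy.inv {V : Subgroup G} (h : Tidy α V) : Tidy α⁻¹ V := by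
  refine ⟨?_, h.2.2, by rw [minusPart_inv, inv_inv]; exact h.2.1⟩
  have hP : (plusPart α V)⁻¹ = plusPart α V := by
    rw [← coe_plusSub, inv_coe_set]
  have hM : (minusPart α V)⁻¹ = minusPart α V := by
    rw [← plusPart_inv, ← coe_plusSub, inv_coe_set]
  calc (V : Set G) = (V : Set G)⁻¹ := inv_coe_set.symm
    _ = (plusPart α V * minusPart α V)⁻¹ := congrArg (·⁻¹) h.1
    _ = minusPart α V * plusPart α V := by rw [mul_inv_rev, hP, hM]
    _ = plusPart α⁻¹ V * minusPart α⁻¹ V := by rw [plusPart_inv, minusPart_inv]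

variable [IsTopologicalGroup G]

theorem exists_subset_image_pow_plusPart (hα : Continuous ⇑α⁻¹) {V : Subgroup G}
    (hVc : IsCompact (V : Set G)) (hVo : IsOpen (V : Set G))
    (hVb : IsClosed (⋃ n : ℕ, ⇑(α ^ n) '' plusPart α V)) {S : Set G} (hS : IsCompact S)
    (hSV : S ⊆ ⋃ n : ℕ, ⇑(α ^ n) '' plusPart α V) : ∃ N : ℕ, S ⊆ ⇑(α ^ N) '' plusPart α V := by
  set H : ℕ → Subgroup G := fun n => mapAut (α ^ n) (plusSub α V)
  have hHcoe : ∀ n, (H n : Set G) = ⇑(α ^ n) '' plusPart α V := fun n =>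
    congrArg (⇑(α ^ n) '' ·) (coe_plusSub α V)
  simp only [← hHcoe] at hVb hSV ⊢
  have hH : Monotone H := fun i j hij => by
    simpa only [← SetLike.coe_subset_coe, hHcoe] using monotone_image_pow_plusPart α V hij
  have hHc : ∀ n, IsClosed (H n : Set G) := fun n =>
    hHcoe n ▸ ((V.isClosed_of_isOpen hVo).plusPart hα).image_mulAut_pow hα n
  have hVH : ((V ⊓ ⨆ n, H n : Subgroup G) : Set G) = (V : Set G) ∩ ⋃ n, (H n : Set G) := by
    rw [Subgroup.coe_inf, Subgroup.coe_iSup_of_directed hH.directed_le]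
  obtain ⟨k, hk⟩ := Subgroup.exists_le_of_isCompact_of_subset_iUnion
    (hVH ▸ hVc.inter_right hVb) hH hHc (hVH ▸ inter_subset_right)
  exact hS.exists_subset_of_subset_iUnion_subgroup hH hSV hVo V.one_mem
    (hVH ▸ SetLike.coe_subset_coe.mpr hk)

theorem mapsTo_inter_of_tidyAbove (hα : Continuous ⇑α⁻¹) {V : Subgroup G}
    (hVc : IsCompact (V : Set G)) (hVo : IsOpen (V : Set G)) (hVa : TidyAbove α V)
    (hVb : IsClosed (⋃ n : ℕ, ⇑(α ^ n) '' plusPart α V)) {K : Set G} (hKc : IsCompact K)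
    (hK : MapsTo α K K) : MapsTo α ((V : Set G) ∩ K) V := by
  rintro x ⟨hxV, hxK⟩
  obtain ⟨u, hu, v, hv, rfl⟩ : x ∈ plusPart α V * minusPart α V := hVa ▸ hxV
  have hvV : ∀ n : ℕ, (α ^ n) v ∈ V := mem_minusPart.mp hv
  have horbit : ∀ n : ℕ, (α ^ n) u ∈ K * V ∩ ⋃ m : ℕ, ⇑(α ^ m) '' plusPart α V := fun n => by
    refine ⟨⟨(α ^ n) (u * v), ?_, ((α ^ n) v)⁻¹, V.inv_mem (hvV n), by simp⟩,
      mem_iUnion.mpr ⟨n, mem_image_of_mem _ hu⟩⟩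
    rw [MulAut.coe_pow_eq_iterate]
    exact hK.iterate n hxK
  obtain ⟨N, hN⟩ := exists_subset_image_pow_plusPart hα hVc hVo hVb
    ((hKc.mul hVc).inter_right hVb) inter_subset_right
  have hαu : α u ∈ plusPart α V := by
    have := hN (horbit (N + 1))
    rwa [pow_succ, MulAut.mul_apply, (α ^ N).injective.mem_set_image] at this
  rw [map_mul]
  exact V.mul_mem (plusPart_subset _ _ hαu) (by simpa using hvV 1)

end Dynamics

theorem tidy_inter_stable_general
    [Group G] [TopologicalSpace G] [IsTopologicalGroup G]
    (α : MulAut G) (hαc : Continuous ⇑α) (hαc' : Continuous ⇑(α⁻¹))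
    (V : Subgroup G) (hVc : IsCompact (V : Set G)) (hVo : IsOpen (V : Set G))
    (hVt : Tidy α (V : Set G))
    (K : Subgroup G) (hKc : IsCompact (K : Set G))
    (hKs : ⇑α '' (K : Set G) = (K : Set G)) :
    ⇑α '' ((V : Set G) ∩ (K : Set G)) = (V : Set G) ∩ (K : Set G) := by
  have hK : MapsTo α K K := fun x hx => hKs ▸ mem_image_of_mem α hx
  have hK' : MapsTo ⇑α⁻¹ K K := fun x hx => by
    obtain ⟨y, hy, rfl⟩ := hKs.symm ▸ hx
    simpa using hy
  have hV : MapsTo α ((V : Set G) ∩ K) V :=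
    mapsTo_inter_of_tidyAbove hαc' hVc hVo hVt.1 hVt.2.1 hKc hK
  have hV' : MapsTo ⇑α⁻¹ ((V : Set G) ∩ K) V :=
    mapsTo_inter_of_tidyAbove (inv_inv α ▸ hαc) hVc hVo hVt.inv.1 hVt.inv.2.1 hKc hK'
  refine (hV.inter (hK.mono_left inter_subset_right)).image_subset.antisymm fun x hx => ?_
  exact ⟨α⁻¹ x, ⟨hV' hx, hK' hx.2⟩, by simp⟩

/-- If `V` is a compact open subgroup tidy for `α` and `K` is a compact
`α`-stable subgroup, then `V ∩ K` is `α`-stable. -/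
theorem tidy_inter_stable
    [Group G] [TopologicalSpace G] [IsTopologicalGroup G] [T2Space G]
    [TotallyDisconnectedSpace G] [LocallyCompactSpace G]
    (α : MulAut G) (hαc : Continuous ⇑α) (hαc' : Continuous ⇑(α⁻¹))
    (V : Subgroup G) (hVc : IsCompact (V : Set G)) (hVo : IsOpen (V : Set G))
    (hVt : Tidy α (V : Set G))
    (K : Subgroup G) (hKc : IsCompact (K : Set G))
    (hKs : ⇑α '' (K : Set G) = (K : Set G)) :
    ⇑α '' ((V : Set G) ∩ (K : Set G)) = (V : Set G) ∩ (K : Set G) :=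
  tidy_inter_stable_general α hαc hαc' V hVc hVo hVt K hKc hKs
end

section
/- Let G be an infinite compact, Hausdorff, totally disconnected topological group and α a topological group automorphism of G. Suppose V and V' are open subgroups of G such that ⋂_{k∈ℤ} α^k(V) = {1}, ⋂_{k∈ℤ} α^k(V') = {1}, V = V₊V₋ and V' = V'₊V'₋. Then the index [α(V₊) : V₊] of V₊ in α(V₊) is finite, strictly greater than 1, and equal to [α(V'₊) : V'₊]. -/
open Pointwise Filter Topology

variable {G : Type*}

/-!
Write `s = [α(V₊) : V₊]` and `Vₙ = V ∩ α(V) ∩ ⋯ ∩ αⁿ(V)`. Since `V₊ ≤ α(V₊)`, `α(V₋) ≤ V₋` and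
`α(V₊) ∩ αⁿ(V₋) ≤ ⋂ₖ αᵏ(V) = 1`, induction gives `Vₙ = V₊ · αⁿ(V₋)`, and passing from `α(Vₙ)` to
`Vₙ₊₁ = Vₙ ∩ α(Vₙ)` costs index exactly `s`. Hence `[G : Vₙ] = sⁿ [G : V]`, finite as `Vₙ` is open.
If `s = 1` then `α(V) ≤ V`, so `α(V) = V` by comparing indices, and `V = ⋂ₖ αᵏ(V) = 1` would make
the compact group `G` discrete, hence finite. For a second such `V'`, compactness gives `N` with
`α⁻ᴺ(V₂ᴺ) ≤ V'`, hence `α⁻ᴺ(V₂ᴺ₊ₙ) ≤ V'ₙ` and `s'ⁿ [G : V'] ≤ s²ᴺ⁺ⁿ [G : V]` for all `n`, so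
`s' ≤ s`; by symmetry `s = s'`.
-/

section MapAut

variable [Group G]

lemma mem_mapAut {β : MulAut G} {W : Subgroup G} {x : G} : x ∈ mapAut β W ↔ β⁻¹ x ∈ W :=
  ⟨by rintro ⟨y, hy, rfl⟩; simpa using hy, fun h => ⟨β⁻¹ x, h, by simp⟩⟩

lemma mapAut_mul (β γ : MulAut G) (W : Subgroup G) :
    mapAut (β * γ) W = mapAut β (mapAut γ W) := by
  ext x; simp [mem_mapAut]

lemma mapAut_one (W : Subgroup G) : mapAut 1 W = W := by
  ext x; simp [mem_mapAut]

lemma mapAut_mono {β : MulAut G} {W₁ W₂ : Subgroup G} (h : W₁ ≤ W₂) :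
    mapAut β W₁ ≤ mapAut β W₂ :=
  fun _ hx => mem_mapAut.2 (h (mem_mapAut.1 hx))

lemma mapAut_inf (β : MulAut G) (W₁ W₂ : Subgroup G) :
    mapAut β (W₁ ⊓ W₂) = mapAut β W₁ ⊓ mapAut β W₂ := by
  ext x; simp [mem_mapAut]

lemma mapAut_zpow_mapAut_zpow (β : MulAut G) (m k : ℤ) (W : Subgroup G) :
    mapAut (β ^ m) (mapAut (β ^ k) W) = mapAut (β ^ (m + k)) W := by
  rw [zpow_add, mapAut_mul]

lemma mapAut_zpow_eq_self {β : MulAut G} {W : Subgroup G} (h : mapAut β W = W) (k : ℤ) :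
    mapAut (β ^ k) W = W := by
  refine zpow_induction_left (P := fun γ => mapAut γ W = W) (mapAut_one W)
    (fun γ hγ => ?_) (fun γ hγ => ?_) k
  · rw [mapAut_mul, hγ, h]
  · rw [mapAut_mul, hγ]
    conv_lhs => rw [← h, ← mapAut_mul, inv_mul_cancel, mapAut_one]

lemma mapAut_eq_map (β : MulAut G) (W : Subgroup G) :
    mapAut β W = W.map β.toMonoidHom := by
  ext x; rfl

lemma index_mapAut (β : MulAut G) (W : Subgroup G) : (mapAut β W).index = W.index := by
  rw [mapAut_eq_map]; exact Subgroup.index_map_of_bijective β.bijective W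

end MapAut

section Index

variable [Group G]

/-- If `S = K T`, every coset of `T` in `S` meets `K`. -/
lemma relIndex_eq_relIndex_of_subset_mul {S K T : Subgroup G} (hKS : K ≤ S)
    (hS : (S : Set G) ⊆ K * T) : T.relIndex S = T.relIndex K := by
  refine Nat.card_congr (Equiv.ofBijective (Subgroup.quotientSubgroupOfEmbeddingOfLE T hKS)
    ⟨(Subgroup.quotientSubgroupOfEmbeddingOfLE T hKS).injective, ?_⟩).symm
  rintro ⟨s⟩
  obtain ⟨k, hk, t, ht, hkt⟩ := hS s.2
  refine ⟨QuotientGroup.mk ⟨k, hk⟩, QuotientGroup.eq.2 ?_⟩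
  simpa [Subgroup.mem_subgroupOf, ← hkt] using ht

end Index

section Factorization

variable [Group G] {β : MulAut G} {P M U : Subgroup G}

lemma coe_mapAut_eq_mul (hU : (U : Set G) = P * M) :
    (mapAut β U : Set G) = mapAut β P * mapAut β M := by
  show ⇑β '' (U : Set G) = ⇑β '' (P : Set G) * ⇑β '' (M : Set G)
  rw [hU, Set.image_mul]

lemma left_le_of_coe_eq_mul (hU : (U : Set G) = P * M) : P ≤ U := by
  intro x hx
  rw [← SetLike.mem_coe, hU]
  exact Set.subset_mul_left _ M.one_mem hx

lemma right_le_of_coe_eq_mul (hU : (U : Set G) = P * M) : M ≤ U := by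
  intro x hx
  rw [← SetLike.mem_coe, hU]
  exact Set.subset_mul_right _ P.one_mem hx

/-- An element of `U ∩ β(U)` factors both in `PM` and in `β(P)β(M)`; the two factorizations agree
because `β(P) ∩ M = 1`. -/
lemma coe_inf_mapAut_eq_mul (hU : (U : Set G) = P * M) (hP : P ≤ mapAut β P)
    (hM : mapAut β M ≤ M) (hPM : mapAut β P ⊓ M = ⊥) :
    ((U ⊓ mapAut β U : Subgroup G) : Set G) = P * mapAut β M := by
  ext x
  constructor
  · intro hx
    have hxU : x ∈ (U : Set G) := (Subgroup.mem_inf.1 hx).1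
    have hxβU : x ∈ (mapAut β U : Set G) := (Subgroup.mem_inf.1 hx).2
    rw [hU] at hxU
    rw [coe_mapAut_eq_mul hU] at hxβU
    obtain ⟨p, hp, m, hm, rfl⟩ := Set.mem_mul.1 hxU
    obtain ⟨p', hp', m', hm', hpm⟩ := Set.mem_mul.1 hxβU
    have hmm' : m' * m⁻¹ ∈ mapAut β P ⊓ M := by
      have h : m' * m⁻¹ = p'⁻¹ * p := by
        rw [eq_inv_mul_iff_mul_eq, ← mul_assoc, hpm, mul_inv_cancel_right]
      exact ⟨h ▸ (mapAut β P).mul_mem ((mapAut β P).inv_mem hp') (hP hp),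
        M.mul_mem (hM hm') (M.inv_mem hm)⟩
    rw [hPM, Subgroup.mem_bot, mul_inv_eq_one] at hmm'
    exact ⟨p, hp, m, hmm' ▸ hm', rfl⟩
  · rintro ⟨p, hp, m, hm, rfl⟩
    refine ⟨?_, ?_⟩
    · exact U.mul_mem (left_le_of_coe_eq_mul hU hp) (right_le_of_coe_eq_mul hU (hM hm))
    · exact (mapAut β U).mul_mem (mapAut_mono (left_le_of_coe_eq_mul hU) (hP hp))
        (mapAut_mono (right_le_of_coe_eq_mul hU) hm)

lemma relIndex_inf_mapAut (hU : (U : Set G) = P * M) (hP : P ≤ mapAut β P)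
    (hM : mapAut β M ≤ M) (hPM : mapAut β P ⊓ M = ⊥) :
    (U ⊓ mapAut β U).relIndex (mapAut β U) = P.relIndex (mapAut β P) := by
  have hT := coe_inf_mapAut_eq_mul hU hP hM hPM
  have hMT : mapAut β M ≤ U ⊓ mapAut β U := right_le_of_coe_eq_mul hT
  have hTP : (U ⊓ mapAut β U) ⊓ mapAut β P = P := by
    refine le_antisymm (fun x hx => ?_) (le_inf (left_le_of_coe_eq_mul hT) hP)
    have hxT : x ∈ ((U ⊓ mapAut β U : Subgroup G) : Set G) := (Subgroup.mem_inf.1 hx).1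
    have hxP : x ∈ mapAut β P := (Subgroup.mem_inf.1 hx).2
    rw [hT] at hxT
    obtain ⟨p, hp, m, hm, rfl⟩ := Set.mem_mul.1 hxT
    have hm1 : m ∈ mapAut β P ⊓ M :=
      ⟨by simpa using (mapAut β P).mul_mem ((mapAut β P).inv_mem (hP hp)) hxP, hM hm⟩
    rw [hPM, Subgroup.mem_bot] at hm1
    simpa [hm1] using hp
  rw [relIndex_eq_relIndex_of_subset_mul (mapAut_mono (left_le_of_coe_eq_mul hU))
      ((coe_mapAut_eq_mul hU).trans_subset (Set.mul_subset_mul_left hMT)),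
    ← Subgroup.inf_relIndex_right, hTP]

end Factorization

section PlusMinus

variable [Group G] {α : MulAut G} {V : Subgroup G}

lemma inv_zpow_apply_mem_mapAut_zpow {m k : ℤ} {W : Subgroup G} {x : G} :
    (α ^ m)⁻¹ x ∈ mapAut (α ^ k) W ↔ x ∈ mapAut (α ^ (m + k)) W := by
  rw [← mapAut_zpow_mapAut_zpow, mem_mapAut (β := α ^ m)]

lemma mem_mapAut_zpow_plusSub {m : ℤ} {x : G} :
    x ∈ mapAut (α ^ m) (plusSub α V) ↔ ∀ k : ℤ, m ≤ k → x ∈ mapAut (α ^ k) V := by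
  simp only [mem_mapAut (β := α ^ m), plusSub, Subgroup.mem_iInf, ← zpow_natCast,
    inv_zpow_apply_mem_mapAut_zpow]
  refine ⟨fun h k hk => ?_, fun h j => h _ (by omega)⟩
  simpa [Int.toNat_of_nonneg (sub_nonneg.2 hk)] using h (k - m).toNat

lemma mem_mapAut_zpow_minusSub {m : ℤ} {x : G} :
    x ∈ mapAut (α ^ m) (minusSub α V) ↔ ∀ k : ℤ, k ≤ m → x ∈ mapAut (α ^ k) V := by
  have hpow : ∀ j : ℕ, α⁻¹ ^ j = α ^ (-(j : ℤ)) := fun j => by simp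
  simp only [mem_mapAut (β := α ^ m), minusSub, Subgroup.mem_iInf, hpow,
    inv_zpow_apply_mem_mapAut_zpow]
  refine ⟨fun h k hk => ?_, fun h j => h _ (by omega)⟩
  simpa [Int.toNat_of_nonneg (sub_nonneg.2 hk)] using h (m - k).toNat

lemma mem_plusSub {x : G} : x ∈ plusSub α V ↔ ∀ k : ℤ, 0 ≤ k → x ∈ mapAut (α ^ k) V := by
  simpa [mapAut_one] using mem_mapAut_zpow_plusSub (V := V) (x := x) (m := 0)

lemma mem_mapAut_plusSub {x : G} :
    x ∈ mapAut α (plusSub α V) ↔ ∀ k : ℤ, 1 ≤ k → x ∈ mapAut (α ^ k) V := by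
  simpa using mem_mapAut_zpow_plusSub (V := V) (x := x) (m := 1)

lemma mem_minusSub {x : G} : x ∈ minusSub α V ↔ ∀ k : ℤ, k ≤ 0 → x ∈ mapAut (α ^ k) V := by
  simpa [mapAut_one] using mem_mapAut_zpow_minusSub (V := V) (x := x) (m := 0)

lemma mem_mapAut_minusSub {x : G} :
    x ∈ mapAut α (minusSub α V) ↔ ∀ k : ℤ, k ≤ 1 → x ∈ mapAut (α ^ k) V := by
  simpa using mem_mapAut_zpow_minusSub (V := V) (x := x) (m := 1)

lemma plusSub_le_mapAut : plusSub α V ≤ mapAut α (plusSub α V) :=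
  fun _ hx => mem_mapAut_plusSub.2 fun k hk => mem_plusSub.1 hx k (by omega)

lemma mapAut_minusSub_le : mapAut α (minusSub α V) ≤ minusSub α V :=
  fun _ hx => mem_minusSub.2 fun k hk => mem_mapAut_minusSub.1 hx k (by omega)

lemma mapAut_plusSub_inf_minusSub_eq_bot (hcore : ⨅ k : ℤ, mapAut (α ^ k) V = ⊥) (n : ℕ) :
    mapAut α (plusSub α V) ⊓ mapAut (α ^ n) (minusSub α V) = ⊥ := by
  refine eq_bot_iff.2 fun x hx => ?_
  obtain ⟨hplus, hminus⟩ := Subgroup.mem_inf.1 hx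
  rw [mem_mapAut_plusSub] at hplus
  rw [← zpow_natCast, mem_mapAut_zpow_minusSub] at hminus
  rw [← hcore, Subgroup.mem_iInf]
  intro k
  rcases le_or_gt 1 k with hk | hk
  · exact hplus k hk
  · exact hminus k (by omega)

end PlusMinus

section IterInf

variable [Group G] {α : MulAut G} {V : Subgroup G}

/-- `iterInf α V n = V ∩ α(V) ∩ ⋯ ∩ αⁿ(V)`. -/
def iterInf (α : MulAut G) (V : Subgroup G) : ℕ → Subgroup G
  | 0 => V
  | n + 1 => iterInf α V n ⊓ mapAut α (iterInf α V n)

lemma mem_mapAut_zpow_iterInf {m : ℤ} {n : ℕ} {x : G} :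
    x ∈ mapAut (α ^ m) (iterInf α V n) ↔
      ∀ k : ℤ, m ≤ k → k ≤ m + n → x ∈ mapAut (α ^ k) V := by
  induction n generalizing m with
  | zero =>
    refine ⟨fun h k hk₁ hk₂ => ?_, fun h => h m le_rfl (by simp)⟩
    obtain rfl : k = m := by omega
    exact h
  | succ n ih =>
    have hshift : mapAut (α ^ m) (mapAut α (iterInf α V n)) =
        mapAut (α ^ (m + 1)) (iterInf α V n) := by
      rw [zpow_add_one, mapAut_mul]
    rw [iterInf, mapAut_inf, Subgroup.mem_inf, hshift, ih, ih]
    refine ⟨fun ⟨h₁, h₂⟩ k hk₁ hk₂ => ?_, fun h => ⟨fun k hk₁ hk₂ => h k hk₁ (by omega),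
      fun k hk₁ hk₂ => h k (by omega) (by push_cast at hk₂ ⊢; omega)⟩⟩
    rcases le_or_gt k (m + n) with hk | hk
    · exact h₁ k hk₁ hk
    · exact h₂ k (by omega) (by push_cast at hk₂ ⊢; omega)

lemma mem_iterInf {n : ℕ} {x : G} :
    x ∈ iterInf α V n ↔ ∀ k : ℤ, 0 ≤ k → k ≤ n → x ∈ mapAut (α ^ k) V := by
  simpa [zpow_zero, mapAut_one] using mem_mapAut_zpow_iterInf (α := α) (V := V) (m := 0) (n := n)

lemma mapAut_mapAut_pow_minusSub_le (n : ℕ) :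
    mapAut α (mapAut (α ^ n) (minusSub α V)) ≤ mapAut (α ^ n) (minusSub α V) := by
  rw [← mapAut_mul, ← pow_succ', pow_succ, mapAut_mul]
  exact mapAut_mono mapAut_minusSub_le

lemma coe_iterInf (hVta : (V : Set G) = plusSub α V * minusSub α V)
    (hcore : ⨅ k : ℤ, mapAut (α ^ k) V = ⊥) (n : ℕ) :
    (iterInf α V n : Set G) = plusSub α V * mapAut (α ^ n) (minusSub α V) := by
  induction n with
  | zero => simpa [iterInf, mapAut_one] using hVta
  | succ n ih =>
    rw [iterInf, coe_inf_mapAut_eq_mul ih plusSub_le_mapAut (mapAut_mapAut_pow_minusSub_le n)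
      (mapAut_plusSub_inf_minusSub_eq_bot hcore n), ← mapAut_mul, ← pow_succ']

lemma index_iterInf (hVta : (V : Set G) = plusSub α V * minusSub α V)
    (hcore : ⨅ k : ℤ, mapAut (α ^ k) V = ⊥) (n : ℕ) :
    (iterInf α V n).index = (plusSub α V).relIndex (mapAut α (plusSub α V)) ^ n * V.index := by
  induction n with
  | zero => simp [iterInf]
  | succ n ih =>
    rw [iterInf, ← Subgroup.relIndex_mul_index inf_le_right,
      relIndex_inf_mapAut (coe_iterInf hVta hcore n) plusSub_le_mapAut
        (mapAut_mapAut_pow_minusSub_le n) (mapAut_plusSub_inf_minusSub_eq_bot hcore n),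
      index_mapAut, ih, pow_succ', mul_assoc]

end IterInf

section Topology

variable [Group G] [TopologicalSpace G] {α : MulAut G}

lemma continuous_zpow_of_continuous (hα : Continuous ⇑α) (hα' : Continuous ⇑α⁻¹) (k : ℤ) :
    Continuous ⇑(α ^ k) :=
  zpow_induction_left (P := fun β : MulAut G => Continuous ⇑β) continuous_id
    (fun _ hβ => hα.comp hβ) (fun _ hβ => hα'.comp hβ) k

lemma isOpen_mapAut {β : MulAut G} (hβ : Continuous ⇑β⁻¹) {W : Subgroup G}
    (hW : IsOpen (W : Set G)) : IsOpen (mapAut β W : Set G) := by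
  have hpre : (mapAut β W : Set G) = ⇑β⁻¹ ⁻¹' W := by
    ext x
    exact mem_mapAut
  rw [hpre]
  exact hW.preimage hβ

lemma isOpen_iterInf (hα' : Continuous ⇑α⁻¹) {V : Subgroup G} (hV : IsOpen (V : Set G))
    (n : ℕ) : IsOpen (iterInf α V n : Set G) := by
  induction n with
  | zero => exact hV
  | succ n ih => exact ih.inter (isOpen_mapAut hα' ih)

variable [IsTopologicalGroup G] [CompactSpace G]

lemma index_ne_zero_of_isOpen {W : Subgroup G} (hW : IsOpen (W : Set G)) : W.index ≠ 0 :=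
  have := W.quotient_finite_of_isOpen hW
  Subgroup.index_ne_zero_of_finite

lemma exists_mapAut_iterInf_le (hα : Continuous ⇑α) (hα' : Continuous ⇑α⁻¹) {V V' : Subgroup G}
    (hV : IsOpen (V : Set G)) (hcore : ⨅ k : ℤ, mapAut (α ^ k) V = ⊥)
    (hV' : IsOpen (V' : Set G)) :
    ∃ N : ℕ, mapAut (α ^ (-(N : ℤ))) (iterInf α V (2 * N)) ≤ V' := by
  set T : ℕ → Subgroup G := fun n => mapAut (α ^ (-(n : ℤ))) (iterInf α V (2 * n))
  have hmem : ∀ n x, x ∈ T n ↔ ∀ k : ℤ, -n ≤ k → k ≤ n → x ∈ mapAut (α ^ k) V := by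
    intro n x
    simp only [T, mem_mapAut_zpow_iterInf, show -(n : ℤ) + ((2 * n : ℕ) : ℤ) = n by push_cast; ring]
  have hT : Antitone fun n => (T n : Set G) := fun m n hmn x hx =>
    (hmem m x).2 fun k hk₁ hk₂ => (hmem n x).1 hx k (by omega) (by omega)
  have hopen : ∀ n, IsOpen (T n : Set G) := fun n =>
    isOpen_mapAut (by simpa [← zpow_neg] using continuous_zpow_of_continuous hα hα' n)
      (isOpen_iterInf hα' hV _)
  have hclosed : ∀ n, IsClosed (T n : Set G) := fun n => (T n).isClosed_of_isOpen (hopen n)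
  exact exists_subset_nhds_of_isCompact' hT.directed_ge
    (fun n => (hclosed n).isCompact) hclosed fun x hx => by
      have hx1 : x ∈ ⨅ k : ℤ, mapAut (α ^ k) V := Subgroup.mem_iInf.2 fun k =>
        (hmem k.natAbs x).1 (Set.mem_iInter.1 hx _) k (by omega) (by omega)
      rw [hcore, Subgroup.mem_bot] at hx1
      exact hx1 ▸ hV'.mem_nhds V'.one_mem

end Topology

lemma iterInf_le_mapAut_iterInf [Group G] {α : MulAut G} {V V' : Subgroup G} {N : ℕ}
    (hN : mapAut (α ^ (-(N : ℤ))) (iterInf α V (2 * N)) ≤ V') (n : ℕ) :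
    iterInf α V (2 * N + n) ≤ mapAut (α ^ (N : ℤ)) (iterInf α V' n) := by
  intro x hx
  rw [mem_iterInf] at hx
  refine mem_mapAut_zpow_iterInf.2 fun j hj₁ hj₂ => mapAut_mono hN ?_
  rw [mapAut_zpow_mapAut_zpow, mem_mapAut_zpow_iterInf]
  exact fun k hk₁ hk₂ => hx k (by omega) (by push_cast at hk₂ ⊢; omega)

lemma le_of_forall_pow_mul_le {s t a b : ℕ} (hb : b ≠ 0) (h : ∀ n, t ^ n * b ≤ s ^ n * a) :
    t ≤ s := by
  by_contra! hst
  have ht : (0 : ℝ) < t := by exact_mod_cast (Nat.zero_le s).trans_lt hst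
  have hlim : Tendsto (fun n => ((s : ℝ) / t) ^ n * a) atTop (𝓝 0) := by
    simpa using (tendsto_pow_atTop_nhds_zero_of_lt_one (by positivity)
      ((div_lt_one ht).2 (by exact_mod_cast hst))).mul_const (a : ℝ)
  obtain ⟨n, hn⟩ := (hlim.eventually (gt_mem_nhds (show (0 : ℝ) < b by positivity))).exists
  rw [div_pow, div_mul_eq_mul_div, div_lt_iff₀ (by positivity)] at hn
  have hn' : (t : ℝ) ^ n * b ≤ (s : ℝ) ^ n * a := by exact_mod_cast h n
  linarith

lemma eq_bot_of_mapAut_le [Group G] {α : MulAut G} {V : Subgroup G}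
    (hcore : ⨅ k : ℤ, mapAut (α ^ k) V = ⊥) (hV : V.index ≠ 0) (h : mapAut α V ≤ V) : V = ⊥ := by
  have hrel : (mapAut α V).relIndex V = 1 := by
    have := Subgroup.relIndex_mul_index h
    rw [index_mapAut] at this
    exact (Nat.mul_eq_right hV).1 this
  have hfix : mapAut α V = V := le_antisymm h (Subgroup.relIndex_eq_one.1 hrel)
  rw [← hcore]
  simp only [mapAut_zpow_eq_self hfix, iInf_const]

section Depth

variable [Group G] [TopologicalSpace G] [IsTopologicalGroup G] [CompactSpace G] {α : MulAut G}

lemma relIndex_plusSub_le (hα : Continuous ⇑α) (hα' : Continuous ⇑α⁻¹) {V V' : Subgroup G}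
    (hV : IsOpen (V : Set G)) (hVta : (V : Set G) = plusSub α V * minusSub α V)
    (hcore : ⨅ k : ℤ, mapAut (α ^ k) V = ⊥) (hV' : IsOpen (V' : Set G))
    (hV'ta : (V' : Set G) = plusSub α V' * minusSub α V')
    (hcore' : ⨅ k : ℤ, mapAut (α ^ k) V' = ⊥) :
    (plusSub α V').relIndex (mapAut α (plusSub α V')) ≤
      (plusSub α V).relIndex (mapAut α (plusSub α V)) := by
  set s := (plusSub α V).relIndex (mapAut α (plusSub α V))
  obtain ⟨N, hN⟩ := exists_mapAut_iterInf_le hα hα' hV hcore hV'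
  refine le_of_forall_pow_mul_le (a := s ^ (2 * N) * V.index) (index_ne_zero_of_isOpen hV')
    fun n => ?_
  have : (iterInf α V (2 * N + n)).FiniteIndex :=
    ⟨index_ne_zero_of_isOpen (isOpen_iterInf hα' hV _)⟩
  calc _ = (mapAut (α ^ (N : ℤ)) (iterInf α V' n)).index := by
        rw [index_mapAut, index_iterInf hV'ta hcore']
    _ ≤ (iterInf α V (2 * N + n)).index :=
        Subgroup.index_antitone (iterInf_le_mapAut_iterInf hN n)
    _ = s ^ n * (s ^ (2 * N) * V.index) := by
        rw [index_iterInf hVta hcore, pow_add]; ring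

lemma one_lt_relIndex_plusSub [Infinite G] (hα' : Continuous ⇑α⁻¹) {V : Subgroup G}
    (hV : IsOpen (V : Set G)) (hVta : (V : Set G) = plusSub α V * minusSub α V)
    (hcore : ⨅ k : ℤ, mapAut (α ^ k) V = ⊥) :
    1 < (plusSub α V).relIndex (mapAut α (plusSub α V)) := by
  have hs := relIndex_inf_mapAut hVta plusSub_le_mapAut mapAut_minusSub_le
    (by simpa [mapAut_one] using mapAut_plusSub_inf_minusSub_eq_bot hcore 0)
  have hmul := Subgroup.relIndex_mul_index (inf_le_right : V ⊓ mapAut α V ≤ mapAut α V)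
  rw [hs] at hmul
  have hs0 : (plusSub α V).relIndex (mapAut α (plusSub α V)) ≠ 0 := fun h0 =>
    index_ne_zero_of_isOpen (hV.inter (isOpen_mapAut hα' hV)) (by rw [← hmul, h0, zero_mul])
  have hs1 : (plusSub α V).relIndex (mapAut α (plusSub α V)) ≠ 1 := by
    intro h1
    rw [← hs, Subgroup.relIndex_eq_one] at h1
    have hbot := eq_bot_of_mapAut_le hcore (index_ne_zero_of_isOpen hV) (le_inf_iff.1 h1).1
    have : DiscreteTopology G :=
      discreteTopology_of_isOpen_singleton_one (by simpa [hbot] using hV)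
    have : Finite G := finite_of_compact_of_discrete
    exact not_finite G
  omega

end Depth

theorem depth_well_defined_general
    [Group G] [TopologicalSpace G] [IsTopologicalGroup G] [CompactSpace G] [Infinite G]
    (α : MulAut G) (hαc : Continuous ⇑α) (hαc' : Continuous ⇑(α⁻¹))
    (V V' : Subgroup G)
    (hVo : IsOpen (V : Set G)) (hV'o : IsOpen (V' : Set G))
    (hV1 : (⋂ k : ℤ, ⇑(α ^ k) '' (V : Set G)) = ({1} : Set G))
    (hV'1 : (⋂ k : ℤ, ⇑(α ^ k) '' (V' : Set G)) = ({1} : Set G))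
    (hVta : (V : Set G) = (plusSub α V : Set G) * (minusSub α V : Set G))
    (hV'ta : (V' : Set G) = (plusSub α V' : Set G) * (minusSub α V' : Set G)) :
    1 < (plusSub α V).relIndex (mapAut α (plusSub α V)) ∧
    (plusSub α V).relIndex (mapAut α (plusSub α V)) =
      (plusSub α V').relIndex (mapAut α (plusSub α V')) := by
  have hcore : ⨅ k : ℤ, mapAut (α ^ k) V = ⊥ :=
    SetLike.coe_injective (by rw [Subgroup.coe_iInf, Subgroup.coe_bot]; exact hV1)
  have hcore' : ⨅ k : ℤ, mapAut (α ^ k) V' = ⊥ :=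
    SetLike.coe_injective (by rw [Subgroup.coe_iInf, Subgroup.coe_bot]; exact hV'1)
  exact ⟨one_lt_relIndex_plusSub hαc' hVo hVta hcore,
    le_antisymm (relIndex_plusSub_le hαc hαc' hV'o hV'ta hcore' hVo hVta hcore)
      (relIndex_plusSub_le hαc hαc' hVo hVta hcore hV'o hV'ta hcore')⟩

/-- For an infinite compact `G`, the index `[α(V₊) : V₊]` is finite,
strictly greater than 1, and independent of the choice of `V` with `⋂ α^k(V) = 1` and
`V = V₊V₋`. -/
theorem depth_well_defined
    [Group G] [TopologicalSpace G] [IsTopologicalGroup G] [T2Space G]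
    [TotallyDisconnectedSpace G] [CompactSpace G] [Infinite G]
    (α : MulAut G) (hαc : Continuous ⇑α) (hαc' : Continuous ⇑(α⁻¹))
    (V V' : Subgroup G)
    (hVo : IsOpen (V : Set G)) (hV'o : IsOpen (V' : Set G))
    (hV1 : (⋂ k : ℤ, ⇑(α ^ k) '' (V : Set G)) = ({1} : Set G))
    (hV'1 : (⋂ k : ℤ, ⇑(α ^ k) '' (V' : Set G)) = ({1} : Set G))
    (hVta : (V : Set G) = (plusSub α V : Set G) * (minusSub α V : Set G))
    (hV'ta : (V' : Set G) = (plusSub α V' : Set G) * (minusSub α V' : Set G)) :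
    1 < (plusSub α V).relIndex (mapAut α (plusSub α V)) ∧
    (plusSub α V).relIndex (mapAut α (plusSub α V)) =
      (plusSub α V').relIndex (mapAut α (plusSub α V')) :=
  depth_well_defined_general α hαc hαc' V V' hVo hV'o hV1 hV'1 hVta hV'ta
end
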